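/- Let P, Q be affine points of E(ℚ) with X^{1/6} ≤ x(P) < x(Q), and suppose x(P) = x₁/s and x(Q) = x₂/s where x₁, x₂ are integers and s is a positive integer. Then P + Q is an affine point and h(x(P+Q)) ≤ h(x₁) + 2·h(x₂) + log 18. -/

import Mathlib

open scoped TensorProduct

noncomputable section

/-- The logarithmic Weil height of a rational number:
`h(p/q) = log max (|p|, q)` for `p/q` in lowest terms. -/
def qh (q : ℚ) : ℝ := Real.log (max (|q.num| : ℝ) (q.den : ℝ))

/-- The short Weierstrass curve `y² = x³ + Ax + B` over `ℚ`. -/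
def Ecurve (A B : ℤ) : WeierstrassCurve.Affine ℚ :=
  { a₁ := 0, a₂ := 0, a₃ := 0, a₄ := (A : ℚ), a₆ := (B : ℚ) }

/-- `X = max (|A|³, |B|²)` as a real number. -/
def Xval (A B : ℤ) : ℝ := max (|(A : ℝ)| ^ 3) (|(B : ℝ)| ^ 2)

/-- The x-coordinate of an affine point (with junk value `0` at the point at infinity). -/
def xCoord {W : WeierstrassCurve.Affine ℚ} : W.Point → ℚ
  | .zero => 0
  | @WeierstrassCurve.Affine.Point.some _ _ _ x _ _ => x

/-- `hh : W.Point → ℝ` is a canonical height for `W`: it vanishes on points of finite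
order, and for every point `P` of infinite order, `h(x(2ⁿ P)) / 4ⁿ → hh P`. -/
def IsCanonicalHeight (W : WeierstrassCurve.Affine ℚ) (hh : W.Point → ℝ) : Prop :=
  (∀ P : W.Point, IsOfFinAddOrder P → hh P = 0) ∧
  (∀ P : W.Point, ¬ IsOfFinAddOrder P →
    Filter.Tendsto (fun n : ℕ => qh (xCoord ((2 ^ n : ℕ) • P)) / 4 ^ n)
      Filter.atTop (nhds (hh P)))

/-- `cos θ_{P,Q} = (ĥ(P+Q) − ĥ(P) − ĥ(Q)) / (2 √(ĥ(P) ĥ(Q)))`. -/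
def cosAngle {W : WeierstrassCurve.Affine ℚ} (hh : W.Point → ℝ) (P Q : W.Point) : ℝ :=
  (hh (P + Q) - hh P - hh Q) / (2 * Real.sqrt (hh P * hh Q))

/-- The rank `dim_ℚ (ℚ ⊗_ℤ G)` of an abelian group `G`. -/
def rankQ (G : Type*) [AddCommGroup G] : ℕ :=
  Module.finrank ℚ (ℚ ⊗[ℤ] G)

end

/-!
Write `x(P) = x₁/s`, `x(Q) = x₂/s` and `F(x) = x³ + As²x + Bs³`. The chord formula gives
`x(P+Q) = N / (s (x₂ - x₁)²)` with `N = (x₁x₂ + As²)(x₁ + x₂) + 2Bs³ - 2w`, where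
`w = s³ y(P) y(Q)` is an integer because `w² = F(x₁) F(x₂)`. The hypothesis `x(P) ≥ X^{1/6}`
gives `s ≤ x₁`, `|A| s² ≤ x₁²` and `|B| s³ ≤ x₁³`, whence `|F(xᵢ)| ≤ 3xᵢ³`, `|N| ≤ 12 x₁x₂²` and
`s (x₂ - x₁)² ≤ x₁x₂²`; so `h(x(P+Q)) ≤ log (12 x₁x₂²)`.
-/

lemma one_le_Xval {A B : ℤ} (hAB : 4 * A ^ 3 + 27 * B ^ 2 ≠ 0) : 1 ≤ Xval A B := by
  rcases eq_or_ne A 0 with rfl | hA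
  · have hB : B ≠ 0 := by rintro rfl; simp at hAB
    exact le_max_of_le_right (one_le_pow₀ (by exact_mod_cast Int.one_le_abs hB))
  · exact le_max_of_le_left (one_le_pow₀ (by exact_mod_cast Int.one_le_abs hA))

lemma bounds_of_Xval_rpow_le {A B x₁ s : ℤ} (hAB : 4 * A ^ 3 + 27 * B ^ 2 ≠ 0) (hs : 0 < s)
    (h : Xval A B ^ ((1 : ℝ) / 6) ≤ ((x₁ / s : ℚ) : ℝ)) :
    s ≤ x₁ ∧ |A * s ^ 2| ≤ x₁ ^ 2 ∧ |B * s ^ 3| ≤ x₁ ^ 3 := by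
  have hX := one_le_Xval hAB
  have hsR : (0 : ℝ) < s := by exact_mod_cast hs
  push_cast at h
  have hu : 1 ≤ (x₁ : ℝ) / s := (Real.one_le_rpow hX (by norm_num)).trans h
  have hx₁ : (s : ℝ) ≤ x₁ := by rwa [one_le_div hsR] at hu
  have hX6 : Xval A B * (s : ℝ) ^ 6 ≤ (x₁ : ℝ) ^ 6 := by
    rw [one_div, Real.rpow_inv_le_iff_of_pos (by linarith) (by linarith) (by norm_num)] at h
    rw [← le_div_iff₀ (by positivity), ← div_pow]
    exact_mod_cast h
  refine ⟨by exact_mod_cast hx₁, ?_, ?_⟩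
  · have h3 : (|(A : ℝ)| * s ^ 2) ^ 3 ≤ ((x₁ : ℝ) ^ 2) ^ 3 :=
      calc (|(A : ℝ)| * s ^ 2) ^ 3 = |(A : ℝ)| ^ 3 * s ^ 6 := by ring
        _ ≤ Xval A B * s ^ 6 := by gcongr; exact le_max_left _ _
        _ ≤ ((x₁ : ℝ) ^ 2) ^ 3 := by rw [← pow_mul]; exact hX6
    have h1 := (pow_le_pow_iff_left₀ (by positivity) (by positivity) (by norm_num)).mp h3
    rw [abs_mul, abs_of_pos (by positivity : 0 < s ^ 2)]
    exact_mod_cast h1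
  · have h2 : (|(B : ℝ)| * s ^ 3) ^ 2 ≤ ((x₁ : ℝ) ^ 3) ^ 2 :=
      calc (|(B : ℝ)| * s ^ 3) ^ 2 = |(B : ℝ)| ^ 2 * s ^ 6 := by ring
        _ ≤ Xval A B * s ^ 6 := by gcongr; exact le_max_right _ _
        _ ≤ ((x₁ : ℝ) ^ 3) ^ 2 := by rw [← pow_mul]; exact hX6
    have h1 := (pow_le_pow_iff_left₀ (by positivity) (pow_nonneg (hsR.le.trans hx₁) 3)
      (by norm_num)).mp h2
    rw [abs_mul, abs_of_pos (by positivity : 0 < s ^ 3)]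
    exact_mod_cast h1

section ChordEstimates

variable {R : Type*} [CommRing R] [LinearOrder R] [IsStrictOrderedRing R]

lemma abs_cubic_le {a b x₁ x : R} (h₀ : 0 ≤ x₁) (hx : x₁ ≤ x)
    (ha : |a| ≤ x₁ ^ 2) (hb : |b| ≤ x₁ ^ 3) : |x ^ 3 + a * x + b| ≤ 3 * x ^ 3 := by
  have hx0 : 0 ≤ x := h₀.trans hx
  have hax : |a * x| ≤ x ^ 3 := by
    rw [abs_mul, abs_of_nonneg hx0]
    calc |a| * x ≤ x₁ ^ 2 * x := by gcongr
      _ ≤ x ^ 3 := by nlinarith [pow_le_pow_left₀ h₀ hx 2]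
  have hb' : |b| ≤ x ^ 3 := hb.trans (pow_le_pow_left₀ h₀ hx 3)
  calc |x ^ 3 + a * x + b| ≤ |x ^ 3| + |a * x| + |b| := abs_add_three _ _ _
    _ ≤ 3 * x ^ 3 := by rw [abs_of_nonneg (pow_nonneg hx0 3)]; linarith

lemma abs_le_of_sq_eq_cubic_mul_cubic {a b x₁ x₂ w : R} (h₀ : 0 ≤ x₁) (hx : x₁ ≤ x₂)
    (ha : |a| ≤ x₁ ^ 2) (hb : |b| ≤ x₁ ^ 3)
    (hw : w ^ 2 = (x₁ ^ 3 + a * x₁ + b) * (x₂ ^ 3 + a * x₂ + b)) :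
    |w| ≤ 3 * x₁ * x₂ ^ 2 := by
  have hx₂ : 0 ≤ x₂ := h₀.trans hx
  refine abs_le_of_sq_le_sq ?_ (by positivity)
  calc w ^ 2 = |x₁ ^ 3 + a * x₁ + b| * |x₂ ^ 3 + a * x₂ + b| := by
        rw [← abs_mul, ← hw, abs_sq]
    _ ≤ (3 * x₁ ^ 3) * (3 * x₂ ^ 3) :=
        mul_le_mul (abs_cubic_le h₀ le_rfl ha hb) (abs_cubic_le h₀ hx ha hb)
          (abs_nonneg _) (by positivity)
    _ ≤ (3 * x₁ * x₂ ^ 2) ^ 2 := by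
        have : x₁ ^ 3 * x₂ ^ 3 ≤ x₁ ^ 2 * x₂ ^ 4 := by
          have := mul_le_mul_of_nonneg_left hx (by positivity : 0 ≤ x₁ ^ 2 * x₂ ^ 3)
          linarith
        nlinarith

lemma abs_chord_numerator_le {a b x₁ x₂ w : R} (h₀ : 0 ≤ x₁) (hx : x₁ ≤ x₂)
    (ha : |a| ≤ x₁ ^ 2) (hb : |b| ≤ x₁ ^ 3)
    (hw : w ^ 2 = (x₁ ^ 3 + a * x₁ + b) * (x₂ ^ 3 + a * x₂ + b)) :
    |(x₁ * x₂ + a) * (x₁ + x₂) + 2 * b - 2 * w| ≤ 12 * x₁ * x₂ ^ 2 := by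
  have hx₂ : 0 ≤ x₂ := h₀.trans hx
  have h₁ : |(x₁ * x₂ + a) * (x₁ + x₂)| ≤ 4 * x₁ * x₂ ^ 2 := by
    have hxa : |x₁ * x₂ + a| ≤ 2 * (x₁ * x₂) := by
      have : x₁ ^ 2 ≤ x₁ * x₂ := by nlinarith
      have := abs_add_le (x₁ * x₂) a
      rw [abs_of_nonneg (mul_nonneg h₀ hx₂)] at this
      linarith
    rw [abs_mul, abs_of_nonneg (add_nonneg h₀ hx₂)]
    calc |x₁ * x₂ + a| * (x₁ + x₂) ≤ 2 * (x₁ * x₂) * (2 * x₂) := by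
          gcongr; linarith
      _ = 4 * x₁ * x₂ ^ 2 := by ring
  have h₂ : |2 * b| ≤ 2 * x₁ * x₂ ^ 2 := by
    rw [abs_mul, abs_two]
    have : x₁ ^ 3 ≤ x₁ * x₂ ^ 2 := by
      have := pow_le_pow_left₀ h₀ hx 2
      nlinarith
    linarith
  have h₃ : |2 * w| ≤ 6 * x₁ * x₂ ^ 2 := by
    rw [abs_mul, abs_two]
    linarith [abs_le_of_sq_eq_cubic_mul_cubic h₀ hx ha hb hw]
  linarith [abs_sub ((x₁ * x₂ + a) * (x₁ + x₂) + 2 * b) (2 * w),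
    abs_add_le ((x₁ * x₂ + a) * (x₁ + x₂)) (2 * b)]

lemma chord_denominator_le {s x₁ x₂ : R} (hs : 0 ≤ s) (hsx : s ≤ x₁) (hx : x₁ ≤ x₂) :
    s * (x₂ - x₁) ^ 2 ≤ x₁ * x₂ ^ 2 := by
  have : (x₂ - x₁) ^ 2 ≤ x₂ ^ 2 := pow_le_pow_left₀ (by linarith) (by linarith) 2
  exact mul_le_mul hsx this (sq_nonneg _) (hs.trans hsx)

end ChordEstimates

lemma qh_intCast (n : ℤ) : qh n = Real.log |n| := by
  rcases eq_or_ne n 0 with rfl | hn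
  · simp [qh]
  · rw [qh, Rat.num_intCast, Rat.den_intCast, Nat.cast_one,
      max_eq_left (by exact_mod_cast Int.one_le_abs hn)]

lemma qh_intCast_div_le (N D : ℤ) (hD : 0 < D) :
    qh (N / D) ≤ Real.log (max |N| D) := by
  rw [← Rat.divInt_eq_div]
  have hnum : |(Rat.divInt N D).num| ≤ |N| := by
    rcases eq_or_ne N 0 with rfl | hN
    · simp
    · exact Int.le_of_dvd (abs_pos.mpr hN) ((abs_dvd_abs _ _).mpr (Rat.num_dvd N hD.ne'))
  have hden : ((Rat.divInt N D).den : ℤ) ≤ D := Int.le_of_dvd hD (Rat.den_dvd N D)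
  refine Real.log_le_log (lt_max_of_lt_right (by exact_mod_cast (Rat.divInt N D).den_pos)) ?_
  exact_mod_cast max_le_max hnum hden

lemma qh_intCast_div_le_of_le {N D x₁ x₂ : ℤ} (hD : 0 < D) (hx₁ : 0 < x₁)
    (hN : |N| ≤ 12 * x₁ * x₂ ^ 2) (hDle : D ≤ x₁ * x₂ ^ 2) :
    qh (N / D) ≤ qh x₁ + 2 * qh x₂ + Real.log 18 := by
  have hx₂ : x₂ ≠ 0 := by rintro rfl; simp at hDle; omega
  have hmax : max |N| D ≤ 12 * x₁ * x₂ ^ 2 :=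
    max_le hN (by nlinarith [pow_pos (abs_pos.mpr hx₂) 2])
  calc qh (N / D) ≤ Real.log (max |N| D) := qh_intCast_div_le N D hD
    _ ≤ Real.log (12 * x₁ * x₂ ^ 2 : ℤ) :=
        Real.log_le_log (by exact_mod_cast lt_max_of_lt_right hD) (by exact_mod_cast hmax)
    _ = Real.log 12 + qh x₁ + 2 * qh x₂ := by
        rw [qh_intCast, qh_intCast, Real.log_abs, Real.log_abs]
        push_cast
        rw [Real.log_mul (by positivity) (by positivity),
          Real.log_mul (by norm_num) (by positivity), Real.log_pow]
        push_cast; ring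
    _ ≤ qh x₁ + 2 * qh x₂ + Real.log 18 := by
        linarith [Real.log_le_log (by norm_num : (0 : ℝ) < 12) (by norm_num : (12 : ℝ) ≤ 18)]

lemma qh_chord_le {a b s x₁ x₂ w : ℤ} (hs : 0 < s) (hsx : s ≤ x₁) (hx : x₁ < x₂)
    (ha : |a| ≤ x₁ ^ 2) (hb : |b| ≤ x₁ ^ 3)
    (hw : w ^ 2 = (x₁ ^ 3 + a * x₁ + b) * (x₂ ^ 3 + a * x₂ + b)) :
    qh (((x₁ * x₂ + a) * (x₁ + x₂) + 2 * b - 2 * w : ℤ) / (s * (x₂ - x₁) ^ 2 : ℤ)) ≤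
      qh x₁ + 2 * qh x₂ + Real.log 18 :=
  qh_intCast_div_le_of_le (mul_pos hs (pow_pos (sub_pos.mpr hx) 2)) (hs.trans_le hsx)
    (abs_chord_numerator_le (hs.le.trans hsx) hx.le ha hb hw)
    (chord_denominator_le hs.le hsx hx.le)

lemma Ecurve_equation_iff {A B : ℤ} {x y : ℚ} :
    (Ecurve A B).Equation x y ↔ y ^ 2 = x ^ 3 + A * x + B := by
  simp [WeierstrassCurve.Affine.equation_iff, Ecurve]

lemma xCoord_add_of_X_ne {A B : ℤ} {u v yP yQ : ℚ} (hP : (Ecurve A B).Nonsingular u yP)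
    (hQ : (Ecurve A B).Nonsingular v yQ) (huv : u ≠ v) :
    xCoord (.some u yP hP + .some v yQ hQ) =
      ((u * v + A) * (u + v) + 2 * B - 2 * yP * yQ) / (u - v) ^ 2 := by
  rw [WeierstrassCurve.Affine.Point.add_of_X_ne huv]
  change (Ecurve A B).addX u v ((Ecurve A B).slope u v yP yQ) = _
  have hP' := Ecurve_equation_iff.mp hP.1
  have hQ' := Ecurve_equation_iff.mp hQ.1
  have : u - v ≠ 0 := sub_ne_zero.mpr huv
  rw [WeierstrassCurve.Affine.slope_of_X_ne huv, WeierstrassCurve.Affine.addX]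
  simp only [Ecurve]
  field_simp
  linear_combination hP' + hQ'

lemma cube_mul_sq_eq_of_equation {A B x s : ℤ} {y : ℚ} (hs : (s : ℚ) ≠ 0)
    (h : (Ecurve A B).Equation (x / s) y) :
    (s : ℚ) ^ 3 * y ^ 2 = (x ^ 3 + A * s ^ 2 * x + B * s ^ 3 : ℤ) := by
  rw [Ecurve_equation_iff.mp h]
  push_cast
  field_simp

lemma exists_intCast_eq_of_mul_self_eq_intCast {t : ℚ} {n : ℤ} (h : t * t = n) :
    ∃ w : ℤ, (w : ℚ) = t := by
  have hden : t.den * t.den = 1 := by rw [← Rat.mul_self_den, h, Rat.den_intCast]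
  exact ⟨t.num, Rat.coe_int_num_of_den_eq_one (Nat.eq_one_of_mul_eq_one_right hden)⟩

lemma chord_div_rescale {K : Type*} [Field K] {s x₁ x₂ a b w : K} (hs : s ≠ 0)
    (hx : x₂ - x₁ ≠ 0) :
    ((x₁ / s * (x₂ / s) + a) * (x₁ / s + x₂ / s) + 2 * b - 2 * (w / s ^ 3)) /
        (x₁ / s - x₂ / s) ^ 2 =
      ((x₁ * x₂ + a * s ^ 2) * (x₁ + x₂) + 2 * (b * s ^ 3) - 2 * w) / (s * (x₂ - x₁) ^ 2) := by
  rw [div_sub_div_same, div_pow, ← neg_sub x₂, neg_sq]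
  field_simp

theorem statement5 (A B : ℤ) (hAB : 4 * A ^ 3 + 27 * B ^ 2 ≠ 0)
    (P Q : (Ecurve A B).Point) (hP : P ≠ 0) (hQ : Q ≠ 0)
    (hXP : Xval A B ^ ((1 : ℝ) / 6) ≤ ((xCoord P : ℚ) : ℝ))
    (hPQ : xCoord P < xCoord Q)
    (x₁ x₂ s : ℤ) (hs : 0 < s)
    (hx₁ : xCoord P = (x₁ : ℚ) / (s : ℚ)) (hx₂ : xCoord Q = (x₂ : ℚ) / (s : ℚ)) :
    P + Q ≠ 0 ∧
    qh (xCoord (P + Q)) ≤ qh (x₁ : ℚ) + 2 * qh (x₂ : ℚ) + Real.log 18 := by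
  obtain _ | @⟨u, yP, hPns⟩ := P
  · exact absurd rfl hP
  obtain _ | @⟨v, yQ, hQns⟩ := Q
  · exact absurd rfl hQ
  change u = x₁ / s at hx₁
  change v = x₂ / s at hx₂
  change u < v at hPQ
  subst hx₁ hx₂
  refine ⟨by rw [WeierstrassCurve.Affine.Point.add_of_X_ne hPQ.ne]; exact
    WeierstrassCurve.Affine.Point.some_ne_zero _, ?_⟩
  have hsQ : (0 : ℚ) < s := by exact_mod_cast hs
  obtain ⟨hsx, ha, hb⟩ := bounds_of_Xval_rpow_le hAB hs hXP
  have hx : x₁ < x₂ := by exact_mod_cast (div_lt_div_iff_of_pos_right hsQ).mp hPQ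
  have hyP := cube_mul_sq_eq_of_equation hsQ.ne' hPns.1
  have hyQ := cube_mul_sq_eq_of_equation hsQ.ne' hQns.1
  have hsq : (s ^ 3 * (yP * yQ)) * (s ^ 3 * (yP * yQ)) = (((x₁ ^ 3 + A * s ^ 2 * x₁ + B * s ^ 3) *
      (x₂ ^ 3 + A * s ^ 2 * x₂ + B * s ^ 3) : ℤ) : ℚ) := by
    rw [Int.cast_mul, ← hyP, ← hyQ]; ring
  obtain ⟨w, hw⟩ := exists_intCast_eq_of_mul_self_eq_intCast hsq
  have hw2 : w ^ 2 =
      (x₁ ^ 3 + A * s ^ 2 * x₁ + B * s ^ 3) * (x₂ ^ 3 + A * s ^ 2 * x₂ + B * s ^ 3) := by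
    rw [sq]; exact_mod_cast hw ▸ hsq
  have hyPyQ : yP * yQ = w / s ^ 3 := by rw [hw]; field_simp
  rw [xCoord_add_of_X_ne hPns hQns hPQ.ne, mul_assoc 2 yP yQ, hyPyQ,
    chord_div_rescale hsQ.ne' (sub_ne_zero.mpr (by exact_mod_cast hx.ne'))]
  exact_mod_cast qh_chord_le hs hsx hx ha hb hw2
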